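/- arXiv:2004.07643 — 2 statements merged into one kernel-verified Lean document; each statement's English description precedes it below -/
import Mathlib

section
/- Let X ⊆ {0,1}^ℤ be a subshift and X̃ its hereditary closure. Then d(X,S) = d(X̃,S), i.e., sup over invariant measures of the measure of [1] is the same for X and X̃. -/
open MeasureTheory Filter Real
open scoped ENNReal

attribute [local instance] Classical.propDecidable

/-- The two-sided binary sequence space `{0,1}^ℤ`. -/
abbrev Omega : Type := ℤ → Bool

/-- The left shift. -/
def shift (x : Omega) : Omega := fun n => x (n + 1)

/-- The cylinder set of a word `W` of length `n`, read from coordinate `0`. -/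
def cyl (n : ℕ) (W : Fin n → Bool) : Set Omega := {x | ∀ i : Fin n, x ((i : ℕ) : ℤ) = W i}

/-- The language of `X`: words of length `n` appearing (at position 0) in some point of `X`. -/
def lang (X : Set Omega) (n : ℕ) : Set (Fin n → Bool) :=
  {W | ∃ x ∈ X, ∀ i : Fin n, x ((i : ℕ) : ℤ) = W i}

/-- Number of ones in a word. -/
def ones {n : ℕ} (W : Fin n → Bool) : ℕ := (Finset.univ.filter fun i => W i = true).card

/-- `maxOnes X n` is the maximal number of ones in an allowed word of length `n`. -/
noncomputable def maxOnes (X : Set Omega) (n : ℕ) : ℕ :=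
  (Finset.univ.filter fun W : Fin n → Bool => W ∈ lang X n).sup ones

/-- `d(X,S)`: the supremum over shift-invariant Borel probability measures concentrated
on `X` of the measure of the cylinder `[1] = {x | x 0 = true}`. -/
noncomputable def dsup (X : Set Omega) : ℝ :=
  ⨆ μ : {μ : Measure Omega // IsProbabilityMeasure μ ∧ μ X = 1 ∧ Measure.map shift μ = μ},
    ((μ : Measure Omega) {x | x 0 = true}).toReal

/-- The hereditary closure of `X`. -/
def her (X : Set Omega) : Set Omega := {z | ∃ x ∈ X, ∀ i, z i ≤ x i}

/-!
Every invariant measure carried by `X` is carried by `X̃ ⊇ X`, so `d(X) ≤ d(X̃)`.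
Conversely, let `ν` be invariant and carried by `X̃`. By invariance, `n · ν[1]` is the
`ν`-integral of the number of ones among the first `n` coordinates, and a point of `X̃` has
no more ones there than the point of `X` above it; hence `n · ν[1] ≤ maxOnes X n`.
Pick `yₙ ∈ X` whose first `n + 1` coordinates realise `maxOnes X (n + 1)`. A weak-* limit point
`μ` of the empirical measures along the orbit segments `yₙ, S yₙ, …, Sⁿ yₙ` is invariant
(Krylov–Bogolyubov) and carried by the closed set `X`; since `[1]` is clopen,
`μ[1] = lim maxOnes X (n + 1) / (n + 1) ≥ ν[1]`.
-/

open Topology BoundedContinuousFunction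

lemma exists_ultrafilter_le_tendsto {α K : Type*} [TopologicalSpace K] [CompactSpace K]
    (F : Filter α) [F.NeBot] (f : α → K) :
    ∃ L : Ultrafilter α, ↑L ≤ F ∧ ∃ a, Tendsto f L (𝓝 a) := by
  obtain ⟨a, -, ha⟩ := isCompact_univ.ultrafilter_le_nhds ((Ultrafilter.of F).map f) (by simp)
  exact ⟨Ultrafilter.of F, Ultrafilter.of_le F, a, ha⟩

section Empirical

variable {E : Type*} [MeasurableSpace E] (T : E → E)

lemma isProbabilityMeasure_average_dirac (x : ℕ → E) (n : ℕ) :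
    IsProbabilityMeasure
      (((n : ℝ≥0∞) + 1)⁻¹ • ∑ k ∈ Finset.range (n + 1), Measure.dirac (x k)) := by
  constructor
  simp only [Measure.smul_apply, Measure.coe_finsetSum, Finset.sum_apply, measure_univ,
    Finset.sum_const, Finset.card_range, nsmul_eq_mul, mul_one, Nat.cast_succ, smul_eq_mul]
  exact ENNReal.inv_mul_cancel (by simp) (by simp)

noncomputable def empirical (x : E) (n : ℕ) : ProbabilityMeasure E :=
  ⟨((n : ℝ≥0∞) + 1)⁻¹ • ∑ k ∈ Finset.range (n + 1), Measure.dirac (T^[k] x),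
    isProbabilityMeasure_average_dirac (fun k => T^[k] x) n⟩

lemma empirical_apply (x : E) (n : ℕ) {s : Set E} (hs : MeasurableSet s) :
    (empirical T x n : Measure E) s =
      ((n : ℝ≥0∞) + 1)⁻¹ * ∑ k ∈ Finset.range (n + 1), s.indicator 1 (T^[k] x) := by
  simp only [empirical, ProbabilityMeasure.coe_mk, Measure.smul_apply, Measure.coe_finsetSum,
    Finset.sum_apply, Measure.dirac_apply' _ hs, smul_eq_mul]

lemma empirical_eq_one {x : E} {n : ℕ} {s : Set E} (hs : MeasurableSet s)
    (h : ∀ k ≤ n, T^[k] x ∈ s) : (empirical T x n : Measure E) s = 1 := by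
  rw [empirical_apply T x n hs, Finset.sum_congr rfl fun k hk =>
    Set.indicator_of_mem (h k (Finset.mem_range_succ_iff.1 hk)) 1]
  simp only [Pi.one_apply, Finset.sum_const, Finset.card_range, nsmul_eq_mul, mul_one,
    Nat.cast_succ]
  exact ENNReal.inv_mul_cancel (by simp) (by simp)

lemma integral_empirical (x : E) (n : ℕ) {f : E → ℝ} (hf : StronglyMeasurable f) :
    ∫ z, f z ∂(empirical T x n : Measure E) =
      ((n : ℝ) + 1)⁻¹ * ∑ k ∈ Finset.range (n + 1), f (T^[k] x) := by
  rw [empirical, ProbabilityMeasure.coe_mk, integral_smul_measure,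
    integral_finsetSum_measure fun k _ => integrable_dirac' hf (by simp)]
  simp [integral_dirac' _ _ hf, ENNReal.toReal_add]

lemma integral_comp_sub_integral_empirical (hT : Measurable T) (x : E) (n : ℕ) {f : E → ℝ}
    (hf : StronglyMeasurable f) :
    ∫ z, f (T z) ∂(empirical T x n : Measure E) - ∫ z, f z ∂(empirical T x n : Measure E) =
      ((n : ℝ) + 1)⁻¹ * (f (T^[n + 1] x) - f x) := by
  rw [integral_empirical T x n (f := fun z => f (T z)) (hf.comp_measurable hT),
    integral_empirical T x n hf, ← mul_sub, ← Finset.sum_sub_distrib]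
  simp only [← Function.iterate_succ_apply' T]
  rw [Finset.sum_range_sub (fun k => f (T^[k] x))]
  rfl

variable [TopologicalSpace E] [BorelSpace E] [HasOuterApproxClosed E]

theorem map_eq_of_tendsto_empirical (hT : Continuous T) {L : Filter ℕ} [L.NeBot]
    (hL : L ≤ atTop) {x : ℕ → E} {μ : ProbabilityMeasure E}
    (hμ : Tendsto (fun n => empirical T (x n) n) L (𝓝 μ)) :
    (μ : Measure E).map T = μ := by
  refine ext_of_forall_integral_eq_of_IsFiniteMeasure fun f => ?_
  have hf := f.continuous.stronglyMeasurable
  rw [integral_map hT.aemeasurable hf.aestronglyMeasurable, ← sub_eq_zero]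
  have hlim := (ProbabilityMeasure.tendsto_iff_forall_integral_tendsto.1 hμ
    (f.compContinuous ⟨T, hT⟩)).sub (ProbabilityMeasure.tendsto_iff_forall_integral_tendsto.1 hμ f)
  refine tendsto_nhds_unique hlim
    (squeeze_zero_norm (a := fun n : ℕ => 2 * ‖f‖ * ((n : ℝ) + 1)⁻¹) (fun n => ?_) ?_)
  · simp only [compContinuous_apply, ContinuousMap.coe_mk]
    rw [integral_comp_sub_integral_empirical T hT.measurable (x n) n hf, norm_mul, norm_inv,
      ← dist_eq_norm, mul_comm, Real.norm_of_nonneg (by positivity)]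
    gcongr
    exact f.dist_le_two_norm _ _
  · simpa [one_div] using
      (tendsto_one_div_add_atTop_nhds_zero_nat.const_mul (2 * ‖f‖)).mono_left hL

theorem measure_eq_one_of_tendsto_empirical {L : Filter ℕ} [L.NeBot]
    {x : ℕ → E} {μ : ProbabilityMeasure E}
    (hμ : Tendsto (fun n => empirical T (x n) n) L (𝓝 μ))
    {X : Set E} (hX : IsClosed X) (hx : ∀ n, ∀ k ≤ n, T^[k] (x n) ∈ X) :
    (μ : Measure E) X = 1 := by
  refine le_antisymm prob_le_one ?_
  have := ProbabilityMeasure.limsup_measure_closed_le_of_tendsto hμ hX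
  simpa [empirical_eq_one T hX.measurableSet (hx _)] using this

end Empirical

lemma continuous_shift : Continuous shift :=
  continuous_pi fun n => continuous_apply (n + 1)

lemma measurable_shift : Measurable shift :=
  continuous_shift.measurable

lemma shift_iterate_apply (k : ℕ) (x : Omega) (i : ℤ) : shift^[k] x i = x (i + k) := by
  induction k generalizing x with
  | zero => simp
  | succ k ih =>
    rw [Function.iterate_succ_apply, ih, shift]
    push_cast
    ring_nf

lemma isClopen_setOf_apply_zero : IsClopen {x : Omega | x 0 = true} :=
  (isClopen_discrete {true}).preimage (continuous_apply 0)

def initialWord (n : ℕ) (x : Omega) : Fin n → Bool := fun i => x i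

lemma measurable_initialWord (n : ℕ) : Measurable (initialWord n) :=
  measurable_pi_lambda _ fun _ => measurable_pi_apply _

lemma ones_eq_sum_range (n : ℕ) (x : Omega) :
    (ones (initialWord n x) : ℝ≥0∞) =
      ∑ k ∈ Finset.range n, {z : Omega | z 0 = true}.indicator 1 (shift^[k] x) := by
  rw [ones, Finset.card_filter, ← Fin.sum_univ_eq_sum_range]
  push_cast
  refine Finset.sum_congr rfl fun i _ => ?_
  simp only [initialWord, Set.indicator_apply, Set.mem_ofPred_eq, shift_iterate_apply, zero_add,
    Pi.one_apply]
  congr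

lemma empirical_shift_apply_zero (x : Omega) (n : ℕ) :
    (empirical shift x n : Measure Omega) {z | z 0 = true} =
      ones (initialWord (n + 1) x) / ((n : ℝ≥0∞) + 1) := by
  rw [empirical_apply _ _ _ isClopen_setOf_apply_zero.isOpen.measurableSet, ones_eq_sum_range,
    ENNReal.div_eq_inv_mul]

lemma lintegral_ones_initialWord {ν : Measure Omega} (hν : MeasurePreserving shift ν ν)
    (n : ℕ) : ∫⁻ z, (ones (initialWord n z) : ℝ≥0∞) ∂ν = n * ν {x | x 0 = true} := by
  have hmeas := isClopen_setOf_apply_zero.isOpen.measurableSet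
  have hpre : ∀ k (z : Omega), {x : Omega | x 0 = true}.indicator 1 (shift^[k] z) =
      (shift^[k] ⁻¹' {x | x 0 = true}).indicator (1 : Omega → ℝ≥0∞) z := fun _ _ => rfl
  simp_rw [ones_eq_sum_range, hpre]
  rw [lintegral_finsetSum _ fun k _ => measurable_one.indicator (measurable_shift.iterate k hmeas)]
  simp_rw [lintegral_indicator_one (measurable_shift.iterate _ hmeas),
    (hν.iterate _).measure_preimage hmeas.nullMeasurableSet]
  simp

lemma mul_measure_le_of_ones_le {ν : Measure Omega} [IsProbabilityMeasure ν]
    (hν : MeasurePreserving shift ν ν) {Y : Set Omega} (hY : ν Y = 1) {n M : ℕ}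
    (h : ∀ z ∈ Y, ones (initialWord n z) ≤ M) :
    n * ν {x | x 0 = true} ≤ M := by
  have hmeas : Measurable fun z => (ones (initialWord n z) : ℝ≥0∞) :=
    (Measurable.of_discrete (f := fun W : Fin n → Bool => (ones W : ℝ≥0∞))).comp
      (measurable_initialWord n)
  have hle : MeasurableSet {z | (ones (initialWord n z) : ℝ≥0∞) ≤ M} := hmeas measurableSet_Iic
  have hae : ∀ᵐ z ∂ν, (ones (initialWord n z) : ℝ≥0∞) ≤ M := by
    refine ae_iff.2 ((prob_compl_eq_zero_iff hle).2 (le_antisymm prob_le_one ?_))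
    exact hY ▸ measure_mono fun z hz => by exact_mod_cast h z hz
  calc n * ν {x | x 0 = true} = ∫⁻ z, (ones (initialWord n z) : ℝ≥0∞) ∂ν :=
        (lintegral_ones_initialWord hν n).symm
    _ ≤ ∫⁻ _, (M : ℝ≥0∞) ∂ν := lintegral_mono_ae hae
    _ = M := by simp

lemma ones_mono {n : ℕ} {W V : Fin n → Bool} (h : W ≤ V) : ones W ≤ ones V :=
  Finset.card_le_card fun i hi => by
    simp only [Finset.mem_filter, Finset.mem_univ, true_and] at hi ⊢
    exact Bool.eq_true_of_true_le (hi ▸ h i)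

lemma ones_initialWord_le_maxOnes {X : Set Omega} {x : Omega} (hx : x ∈ X) (n : ℕ) :
    ones (initialWord n x) ≤ maxOnes X n :=
  Finset.le_sup (by simpa using ⟨x, hx, fun _ => rfl⟩)

lemma ones_initialWord_le_maxOnes_of_mem_her {X : Set Omega} {z : Omega} (hz : z ∈ her X)
    (n : ℕ) : ones (initialWord n z) ≤ maxOnes X n := by
  obtain ⟨x, hx, hzx⟩ := hz
  exact (ones_mono fun i => hzx i).trans (ones_initialWord_le_maxOnes hx n)

lemma exists_ones_initialWord_eq_maxOnes {X : Set Omega} (hX : X.Nonempty) (n : ℕ) :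
    ∃ x ∈ X, ones (initialWord n x) = maxOnes X n := by
  obtain ⟨x₀, hx₀⟩ := hX
  obtain ⟨W, hW, hWmax⟩ := Finset.exists_mem_eq_sup {W | W ∈ lang X n}
    ⟨initialWord n x₀, Finset.mem_filter.2 ⟨Finset.mem_univ _, x₀, hx₀, fun _ => rfl⟩⟩ ones
  obtain ⟨x, hx, hxW⟩ := (Finset.mem_filter.1 hW).2
  exact ⟨x, hx, by rw [maxOnes, hWmax, show initialWord n x = W from funext hxW]⟩

theorem exists_invariant_measure_forall_le {X : Set Omega} (hX : IsClosed X)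
    (hne : X.Nonempty) (hinv : Set.MapsTo shift X X) :
    ∃ μ : Measure Omega, IsProbabilityMeasure μ ∧ μ X = 1 ∧ μ.map shift = μ ∧
      ∀ ν : Measure Omega, IsProbabilityMeasure ν → ν (her X) = 1 → ν.map shift = ν →
        ν {x | x 0 = true} ≤ μ {x | x 0 = true} := by
  choose y hyX hy using fun n => exists_ones_initialWord_eq_maxOnes hne (n + 1)
  obtain ⟨L, hL, μ, hμ⟩ := exists_ultrafilter_le_tendsto atTop fun n => empirical shift (y n) n
  refine ⟨μ, inferInstance, measure_eq_one_of_tendsto_empirical shift hμ hX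
    (fun n k _ => hinv.iterate k (hyX n)), map_eq_of_tendsto_empirical shift continuous_shift hL hμ,
    fun ν _ hνX hνinv => ?_⟩
  have hlim := ProbabilityMeasure.tendsto_measure_of_null_frontier_of_tendsto' hμ
    (E := {x : Omega | x 0 = true}) (by simp [isClopen_setOf_apply_zero.frontier_eq])
  refine ge_of_tendsto hlim (Eventually.of_forall fun n => ?_)
  have hbound := mul_measure_le_of_ones_le ⟨measurable_shift, hνinv⟩ hνX
    fun z hz => ones_initialWord_le_maxOnes_of_mem_her hz (n + 1)
  rw [empirical_shift_apply_zero, hy n, ENNReal.le_div_iff_mul_le (by simp) (by simp), mul_comm]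
  exact_mod_cast hbound

lemma le_dsup {X : Set Omega} (μ : Measure Omega) [IsProbabilityMeasure μ] (hX : μ X = 1)
    (hμ : μ.map shift = μ) : (μ {x | x 0 = true}).toReal ≤ dsup X :=
  le_ciSup (f := fun μ : {μ : Measure Omega // IsProbabilityMeasure μ ∧ μ X = 1 ∧
      μ.map shift = μ} => ((μ : Measure Omega) {x | x 0 = true}).toReal)
    ⟨1, by
      rintro _ ⟨⟨ν, hν, -⟩, rfl⟩
      exact ENNReal.toReal_le_of_le_ofReal zero_le_one (by simpa using prob_le_one)⟩
    ⟨μ, inferInstance, hX, hμ⟩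

lemma dsup_nonneg (X : Set Omega) : 0 ≤ dsup X :=
  Real.iSup_nonneg fun _ => ENNReal.toReal_nonneg

lemma dsup_le {X : Set Omega} {a : ℝ} (ha : 0 ≤ a)
    (h : ∀ μ : Measure Omega, IsProbabilityMeasure μ → μ X = 1 → μ.map shift = μ →
      (μ {x | x 0 = true}).toReal ≤ a) : dsup X ≤ a :=
  Real.iSup_le (fun μ => h μ μ.2.1 μ.2.2.1 μ.2.2.2) ha

lemma dsup_mono {X Y : Set Omega} (hXY : X ⊆ Y) : dsup X ≤ dsup Y :=
  dsup_le (dsup_nonneg Y) fun μ _ hX hμ =>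
    le_dsup μ (le_antisymm prob_le_one (hX ▸ measure_mono hXY)) hμ

lemma subset_her (X : Set Omega) : X ⊆ her X := fun x hx => ⟨x, hx, fun _ => le_rfl⟩

/-- the density of a subshift equals the density of its hereditary closure:
`d(X,S) = d(X̃,S)`. -/
theorem stmt7 (X : Set Omega) (hcl : IsClosed X) (hne : X.Nonempty)
    (hinv : shift '' X = X) :
    dsup X = dsup (her X) := by
  obtain ⟨μ, _, hμX, hμ, hμmax⟩ :=
    exists_invariant_measure_forall_le hcl hne (Set.mapsTo_iff_image_subset.2 hinv.subset)
  refine le_antisymm (dsup_mono (subset_her X)) (dsup_le (dsup_nonneg X) fun ν hν hνX hνinv => ?_)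
  exact (ENNReal.toReal_mono (measure_ne_top _ _) (hμmax ν hν hνX hνinv)).trans
    (le_dsup μ hμX hμ)
end

section
/- Let ν be an invariant measure on subshift X and κ = ν * B_{1/2,1/2}. If C is a word in L_n(X) that is ν-ones-maximal, i.e., #₁C = max{#₁W : W ∈ L_n(X), ν(W) > 0}, then κ(C) = ν(C)·2^{-#₁C}. -/
open MeasureTheory Filter Real
open scoped ENNReal

attribute [local instance] Classical.propDecidable

/-- Coordinatewise multiplication `Q(x,y)_i = x_i · y_i`. -/
def Qmul (p : Omega × Omega) : Omega := fun i => p.1 i && p.2 i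

/-!
Split `(x, y)` according to the word `W` that `x` reads on `[0, n)`:
`κ(C) = ∑_W ν(W) · B{y : W ∧ y = C}`. The `B`-factor vanishes unless `C ≤ W` coordinatewise,
and a word `W > C` carries more ones than `C`, so by maximality it is `ν`-null (words outside
`L_n(X)` are `ν`-null because `ν(X) = 1`). Only `W = C` survives, and
`B{y : y = 1 on the ones of C} = 2^{-#₁C}` because that set is a union of `2^{n - #₁C}`
cylinders of length `n`.
-/

open Finset

section Words

variable {n : ℕ}

lemma measurableSet_cyl (W : Fin n → Bool) : MeasurableSet (cyl n W) := by
  simp only [cyl, Set.ofPred_forall]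
  exact .iInter fun i => measurableSet_eq_fun (by fun_prop) measurable_const

lemma disjoint_cyl {W W' : Fin n → Bool} (h : W ≠ W') : Disjoint (cyl n W) (cyl n W') :=
  Set.disjoint_left.mpr fun _ hW hW' => h (funext fun i => (hW i).symm.trans (hW' i))

lemma measure_cyl_eq_zero_of_notMem_lang {X : Set Omega} {ν : Measure Omega}
    [IsProbabilityMeasure ν] (hsupp : ν X = 1) {W : Fin n → Bool} (hW : W ∉ lang X n) :
    ν (cyl n W) = 0 := by
  have hX : X ⊆ (cyl n W)ᶜ := fun x hxX hxW => hW ⟨x, hxX, hxW⟩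
  rw [← prob_compl_eq_one_iff (measurableSet_cyl W)]
  exact le_antisymm prob_le_one (hsupp ▸ measure_mono hX)

lemma card_filter_forall_mem_eq (s : Finset (Fin n)) (V : Fin n → Bool) :
    #{W : Fin n → Bool | ∀ i ∈ s, W i = V i} = 2 ^ (n - #s) := by
  have : ({W : Fin n → Bool | ∀ i ∈ s, W i = V i} : Finset _) =
      Fintype.piFinset fun i => if i ∈ s then {V i} else univ := by
    ext W; simp only [mem_filter, mem_univ, true_and, Fintype.mem_piFinset]
    refine forall_congr' fun i => ?_
    split_ifs <;> simp [*]
  rw [this, Fintype.card_piFinset]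
  simp [apply_ite, prod_ite, filter_not, card_sdiff]

lemma measure_setOf_forall_mem_eq {B : Measure Omega}
    (hB : ∀ W : Fin n → Bool, B (cyl n W) = (2 : ℝ≥0∞)⁻¹ ^ n)
    (s : Finset (Fin n)) (V : Fin n → Bool) :
    B {y | ∀ i ∈ s, y (i : ℕ) = V i} = (2 : ℝ≥0∞)⁻¹ ^ #s := by
  have hunion : {y : Omega | ∀ i ∈ s, y (i : ℕ) = V i}
      = ⋃ W ∈ ({W : Fin n → Bool | ∀ i ∈ s, W i = V i} : Finset _), cyl n W := by
    ext y
    simp only [Set.mem_ofPred_eq, Set.mem_iUnion, mem_filter, mem_univ, true_and, cyl,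
      exists_prop]
    exact ⟨fun hy => ⟨fun i => y (i : ℕ), hy, fun _ => rfl⟩,
      fun ⟨W, hW, hyW⟩ i hi => (hyW i).trans (hW i hi)⟩
  rw [hunion, measure_biUnion_finset (fun W _ W' _ h => disjoint_cyl h)
    (fun W _ => measurableSet_cyl W), sum_congr rfl fun W _ => hB W, sum_const,
    card_filter_forall_mem_eq, nsmul_eq_mul]
  have hs : #s ≤ n := by simpa using card_le_univ s
  calc ((2 ^ (n - #s) : ℕ) : ℝ≥0∞) * 2⁻¹ ^ n
      = (2 * 2⁻¹) ^ (n - #s) * 2⁻¹ ^ #s := by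
        rw [mul_pow, mul_assoc, ← pow_add, Nat.sub_add_cancel hs]; push_cast; rfl
    _ = 2⁻¹ ^ #s := by
        rw [ENNReal.mul_inv_cancel two_ne_zero ENNReal.ofNat_ne_top, one_pow, one_mul]

lemma measurable_Qmul : Measurable Qmul := by
  unfold Qmul; fun_prop

def maskedCyl (W C : Fin n → Bool) : Set Omega := {y | ∀ i : Fin n, (W i && y (i : ℕ)) = C i}

lemma measurableSet_maskedCyl (W C : Fin n → Bool) : MeasurableSet (maskedCyl W C) := by
  simp only [maskedCyl, Set.ofPred_forall]
  exact .iInter fun i => measurableSet_eq_fun (by fun_prop) measurable_const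

lemma preimage_Qmul_cyl (C : Fin n → Bool) :
    Qmul ⁻¹' cyl n C = ⋃ W : Fin n → Bool, cyl n W ×ˢ maskedCyl W C := by
  ext ⟨x, y⟩
  simp only [Set.mem_preimage, Set.mem_iUnion, Set.mem_prod, cyl, maskedCyl, Qmul,
    Set.mem_ofPred_eq]
  exact ⟨fun h => ⟨fun i => x (i : ℕ), fun _ => rfl, h⟩,
    fun ⟨W, hxW, hy⟩ i => (hxW i).symm ▸ hy i⟩

lemma maskedCyl_eq_empty_of_not_le {W C : Fin n → Bool} (h : ¬ C ≤ W) :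
    maskedCyl W C = ∅ := by
  obtain ⟨i, hWi, hCi⟩ : ∃ i, W i = false ∧ C i = true := by
    simpa [Pi.le_def, Bool.lt_iff] using h
  exact Set.eq_empty_of_forall_notMem fun y hy => by simpa [hCi, hWi] using hy i

lemma maskedCyl_self (C : Fin n → Bool) :
    maskedCyl C C = {y | ∀ i ∈ ({i | C i = true} : Finset _), y (i : ℕ) = C i} := by
  ext y
  simp only [maskedCyl, Set.mem_ofPred_eq, mem_filter, mem_univ, true_and]
  refine forall_congr' fun i => ?_
  cases C i <;> simp

lemma ones_strictMono : StrictMono (ones : (Fin n → Bool) → ℕ) := by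
  intro W W' h
  obtain ⟨hle, i, hi⟩ := Pi.lt_def.mp h
  rw [Bool.lt_iff] at hi
  refine card_lt_card ((ssubset_iff_of_subset fun j => ?_).mpr
    ⟨i, by simp [hi.2], by simp [hi.1]⟩)
  simpa using Bool.le_iff_imp.mp (hle j)

lemma measure_cyl_eq_zero_of_lt {X : Set Omega} {ν : Measure Omega} [IsProbabilityMeasure ν]
    (hsupp : ν X = 1) {C W : Fin n → Bool}
    (hmax : ({W : Fin n → Bool | W ∈ lang X n ∧ ν (cyl n W) ≠ 0} : Finset _).sup ones
      ≤ ones C)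
    (hCW : C < W) : ν (cyl n W) = 0 := by
  by_contra hW
  have hlang : W ∈ lang X n := by
    by_contra h
    exact hW (measure_cyl_eq_zero_of_notMem_lang hsupp h)
  have hle : ones W ≤ ones C := (le_sup (by simp [hlang, hW])).trans hmax
  exact (ones_strictMono hCW).not_ge hle

end Words

theorem stmt11_general (X : Set Omega)
    (ν : Measure Omega) [IsProbabilityMeasure ν] (hsupp : ν X = 1)
    (B : Measure Omega) [IsProbabilityMeasure B]
    (hB : ∀ (m : ℕ) (W : Fin m → Bool), B (cyl m W) = (2 : ℝ≥0∞)⁻¹ ^ m)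
    (n : ℕ) (C : Fin n → Bool)
    (hmax : ones C =
      (Finset.univ.filter
        (fun W : Fin n → Bool => W ∈ lang X n ∧ ν (cyl n W) ≠ 0)).sup ones) :
    Measure.map Qmul (ν.prod B) (cyl n C) = ν (cyl n C) * (2 : ℝ≥0∞)⁻¹ ^ ones C := by
  rw [Measure.map_apply measurable_Qmul (measurableSet_cyl C), preimage_Qmul_cyl,
    measure_iUnion (fun W W' h => Set.disjoint_prod.mpr (.inl (disjoint_cyl h)))
      (fun W => (measurableSet_cyl W).prod (measurableSet_maskedCyl W C)),
    tsum_fintype, sum_eq_single C]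
  · rw [Measure.prod_prod, maskedCyl_self, measure_setOf_forall_mem_eq (hB n)]
    rfl
  · intro W _ hWC
    rw [Measure.prod_prod]
    by_cases hCW : C ≤ W
    · rw [measure_cyl_eq_zero_of_lt hsupp hmax.ge (lt_of_le_of_ne hCW (Ne.symm hWC)),
        zero_mul]
    · rw [maskedCyl_eq_empty_of_not_le hCW, measure_empty, mul_zero]
  · simp

/-- if `C ∈ L_n(X)` is `ν`-ones-maximal, i.e.
`#₁C = max{#₁W : W ∈ L_n(X), ν(W) > 0}`, then `κ(C) = ν(C)·2^{-#₁C}` for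
`κ = ν * B_{1/2,1/2}`. -/
theorem stmt11 (X : Set Omega) (hcl : IsClosed X) (hne : X.Nonempty)
    (hinv : shift '' X = X)
    (ν : Measure Omega) [IsProbabilityMeasure ν] (hsupp : ν X = 1)
    (hinvν : Measure.map shift ν = ν)
    (B : Measure Omega) [IsProbabilityMeasure B]
    (hB : ∀ (m : ℕ) (W : Fin m → Bool), B (cyl m W) = (2 : ℝ≥0∞)⁻¹ ^ m)
    (n : ℕ) (C : Fin n → Bool) (hC : C ∈ lang X n)
    (hmax : ones C =
      (Finset.univ.filter
        (fun W : Fin n → Bool => W ∈ lang X n ∧ ν (cyl n W) ≠ 0)).sup ones) :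
    Measure.map Qmul (ν.prod B) (cyl n C) = ν (cyl n C) * (2 : ℝ≥0∞)⁻¹ ^ ones C :=
  stmt11_general X ν hsupp B hB n C hmax
end
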